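/- The bound in the main theorem is sharp: let ū be the unique maximizer of M(u) = sqrt(2u)·e^{-2u}·Σ_{k=0}^∞ (u^k/k!)^2, and for each integer a ≥ 1 let S^{2a} = U_a + V_a where U_a ~ Binomial(a, ū/a) and V_a ~ Binomial(a, 1 - ū/a) are independent. Then sqrt(2a·(ū/a)·(1 - ū/a)) · P(S^{2a} = a) = sqrt(2ū(1 - ū/a)) · Σ_{k=0}^a C(a,k)^2 (ū/a)^{2k} (1 - ū/a)^{2(a-k)}, and this quantity converges to M(ū) = sup_{u≥0} M(u) as a → ∞. -/

import Mathlib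

open MeasureTheory ProbabilityTheory

/-- `M(u) = √(2u) e^{-2u} Σ_k (u^k/k!)²`. -/
noncomputable def Mfun (u : ℝ) : ℝ :=
  Real.sqrt (2 * u) * Real.exp (-2 * u) * ∑' k : ℕ, (u ^ k / (Nat.factorial k : ℝ)) ^ 2

/-!
The sets `{U = k} ∩ {V = l}` cover `Ω` and, by independence, carry the masses `P(U = k) P(V = l)`
of a product of two binomial laws, which add up to one. This forces `μ` to be additive on unions
of them even though `U` and `V` need not be measurable, so `P(U + V = a)` is the convolution sum;
by `C(a,k) = C(a,a-k)` its terms are the squares of the binomial probabilities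
`C(a,k) (u/a)^k (1 - u/a)^(a-k)`. These converge to the Poisson probabilities `e^{-u} u^k / k!`
and are bounded by `u^k / k!` once `a ≥ u`, so dominated convergence gives the limit
`e^{-2u} Σ_k (u^k/k!)²`.
-/

open Set Filter Topology Finset.HasAntidiagonal
open scoped ENNReal Nat

lemma measure_biUnion_eq_tsum_of_tsum_le {Ω ι : Type*} [MeasurableSpace Ω] [Countable ι]
    {μ : Measure Ω} [IsFiniteMeasure μ] {A : ι → Set Ω} (hA : ⋃ i, A i = univ)
    (hsum : ∑' i, μ (A i) ≤ μ univ) (s : Set ι) :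
    μ (⋃ i ∈ s, A i) = ∑' i : s, μ (A i) := by
  refine le_antisymm (measure_biUnion_le μ s.to_countable A) ?_
  have hcompl : μ (⋃ i ∈ s, A i)ᶜ ≤ ∑' i : ↥sᶜ, μ (A i) := by
    refine (measure_mono ?_).trans (measure_biUnion_le μ sᶜ.to_countable A)
    intro ω hω
    obtain ⟨i, hi⟩ := mem_iUnion.1 (hA.superset (mem_univ ω))
    exact mem_biUnion (fun his => hω (mem_biUnion his hi)) hi
  have hfinite : ∑' i : ↥sᶜ, μ (A i) ≠ ∞ :=
    ((ENNReal.tsum_comp_le_tsum_of_injective Subtype.val_injective _).trans hsum).trans_lt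
      (measure_lt_top μ univ) |>.ne
  refine ENNReal.le_of_add_le_add_right hfinite ?_
  calc ∑' i : s, μ (A i) + ∑' i : ↥sᶜ, μ (A i) = ∑' i, μ (A i) :=
        ENNReal.summable.tsum_add_tsum_compl (f := fun i => μ (A i)) ENNReal.summable
    _ ≤ μ univ := hsum
    _ ≤ μ (⋃ i ∈ s, A i) + μ (⋃ i ∈ s, A i)ᶜ := by
        rw [← union_compl_self (⋃ i ∈ s, A i)]; exact measure_union_le _ _
    _ ≤ μ (⋃ i ∈ s, A i) + ∑' i : ↥sᶜ, μ (A i) := by gcongr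

lemma ProbabilityTheory.IndepFun.measure_add_eq_sum_antidiagonal {Ω M : Type*}
    [MeasurableSpace Ω] [AddMonoid M] [Finset.HasAntidiagonal M] [Countable M] [MeasurableSpace M]
    [MeasurableSingletonClass M] {μ : Measure Ω} [IsProbabilityMeasure μ] {U V : Ω → M}
    (hUV : IndepFun U V μ) (hU : ∑' k, μ {ω | U ω = k} ≤ 1)
    (hV : ∑' k, μ {ω | V ω = k} ≤ 1)
    (a : M) :
    μ {ω | U ω + V ω = a} =
      ∑ kl ∈ antidiagonal a, μ {ω | U ω = kl.1} * μ {ω | V ω = kl.2} := by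
  let A : M × M → Set Ω := fun kl => U ⁻¹' {kl.1} ∩ V ⁻¹' {kl.2}
  have hmeasA : ∀ kl, μ (A kl) = μ {ω | U ω = kl.1} * μ {ω | V ω = kl.2} := fun kl =>
    hUV.measure_inter_preimage_eq_mul _ _ (measurableSet_singleton _) (measurableSet_singleton _)
  have hcover : ⋃ kl, A kl = univ :=
    eq_univ_of_forall fun ω => mem_iUnion.2 ⟨(U ω, V ω), rfl, rfl⟩
  have hsum : ∑' kl, μ (A kl) ≤ μ univ := by
    rw [measure_univ, tsum_congr hmeasA,
      ENNReal.tsum_prod (f := fun k l => μ {ω | U ω = k} * μ {ω | V ω = l})]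
    simp only [ENNReal.tsum_mul_left, ENNReal.tsum_mul_right]
    exact mul_le_one' hU hV
  have hset : {ω | U ω + V ω = a} = ⋃ kl ∈ (antidiagonal a : Set (M × M)), A kl := by
    ext ω
    simp [A]
  rw [hset, measure_biUnion_eq_tsum_of_tsum_le hcover hsum]
  exact (Finset.tsum_subtype' _ fun kl => μ (A kl)).trans
    (Finset.sum_congr rfl fun kl _ => hmeasA kl)

lemma tsum_ofReal_choose_mul_pow_mul_pow {p q : ℝ} (hp : 0 ≤ p) (hq : 0 ≤ q) (n : ℕ) :
    ∑' k, ENNReal.ofReal (n.choose k * p ^ k * q ^ (n - k)) = ENNReal.ofReal ((p + q) ^ n) := by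
  rw [tsum_eq_sum (s := Finset.range (n + 1)), ← ENNReal.ofReal_sum_of_nonneg, add_pow]
  · exact congrArg _ (Finset.sum_congr rfl fun k _ => by ring)
  · intro k _; positivity
  · intro k hk
    rw [Nat.choose_eq_zero_of_lt (by simpa using hk)]
    simp

lemma toReal_measure_add_eq_sum_choose_sq {Ω : Type*} [MeasurableSpace Ω] {μ : Measure Ω}
    [IsProbabilityMeasure μ] {U V : Ω → ℕ} (hUV : IndepFun U V μ) {n : ℕ} {p q : ℝ}
    (hp : 0 ≤ p) (hq : 0 ≤ q) (hpq : p + q = 1)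
    (hU : ∀ k, μ {ω | U ω = k} = ENNReal.ofReal (n.choose k * p ^ k * q ^ (n - k)))
    (hV : ∀ k, μ {ω | V ω = k} = ENNReal.ofReal (n.choose k * q ^ k * p ^ (n - k))) :
    (μ {ω | U ω + V ω = n}).toReal =
      ∑ k ∈ Finset.range (n + 1), (n.choose k : ℝ) ^ 2 * p ^ (2 * k) * q ^ (2 * (n - k)) := by
  have hUsum : ∑' k, μ {ω | U ω = k} ≤ 1 := by
    simp_rw [hU, tsum_ofReal_choose_mul_pow_mul_pow hp hq, hpq, one_pow, ENNReal.ofReal_one,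
      le_refl]
  have hVsum : ∑' k, μ {ω | V ω = k} ≤ 1 := by
    simp_rw [hV, tsum_ofReal_choose_mul_pow_mul_pow hq hp, add_comm q, hpq, one_pow,
      ENNReal.ofReal_one, le_refl]
  rw [hUV.measure_add_eq_sum_antidiagonal hUsum hVsum,
    Finset.Nat.sum_antidiagonal_eq_sum_range_succ
      (fun k l => μ {ω | U ω = k} * μ {ω | V ω = l}),
    ENNReal.toReal_sum fun k _ => by simp [hU, hV, ENNReal.mul_eq_top]]
  refine Finset.sum_congr rfl fun k hk => ?_
  have hkn : k ≤ n := Nat.lt_succ_iff.1 (Finset.mem_range.1 hk)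
  rw [hU, hV, ENNReal.toReal_mul, ENNReal.toReal_ofReal (by positivity),
    ENNReal.toReal_ofReal (by positivity), Nat.choose_symm hkn, Nat.sub_sub_self hkn]
  ring

lemma choose_mul_div_pow_le {u : ℝ} (hu : 0 ≤ u) (n k : ℕ) :
    n.choose k * (u / n) ^ k ≤ u ^ k / k ! := by
  have hnu : n * (u / n) ≤ u := by
    rcases n.eq_zero_or_pos with rfl | hn
    · simpa using hu
    · rw [mul_div_cancel₀ _ (by positivity)]
  calc n.choose k * (u / n) ^ k ≤ n ^ k / k ! * (u / n) ^ k := by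
        gcongr; exact Nat.choose_le_pow_div k n
    _ = (n * (u / n)) ^ k / k ! := by ring
    _ ≤ u ^ k / k ! := by gcongr

lemma summable_sq_pow_div_factorial (u : ℝ) : Summable fun k => (u ^ k / k !) ^ 2 := by
  refine (Real.summable_pow_div_factorial (u ^ 2)).of_nonneg_of_le (fun k => sq_nonneg _)
    fun k => ?_
  rw [div_pow, ← pow_mul, mul_comm, pow_mul]
  have : (1 : ℝ) ≤ k ! := by exact_mod_cast k.factorial_pos
  gcongr
  nlinarith

lemma tendsto_sum_choose_sq_mul_div_pow {u : ℝ} (hu : 0 ≤ u) :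
    Tendsto (fun n : ℕ => ∑ k ∈ Finset.range (n + 1),
        (n.choose k : ℝ) ^ 2 * (u / n) ^ (2 * k) * (1 - u / n) ^ (2 * (n - k)))
      atTop (𝓝 (Real.exp (-2 * u) * ∑' k : ℕ, (u ^ k / k !) ^ 2)) := by
  set f : ℕ → ℕ → ℝ := fun n k => n.choose k * (u / n) ^ k * (1 - u / n) ^ (n - k)
  have hsum : ∀ n : ℕ, ∑ k ∈ Finset.range (n + 1),
      (n.choose k : ℝ) ^ 2 * (u / n) ^ (2 * k) * (1 - u / n) ^ (2 * (n - k)) =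
        ∑' k, f n k ^ 2 := by
    intro n
    rw [tsum_eq_sum (s := Finset.range (n + 1))]
    · exact Finset.sum_congr rfl fun k _ => by simp only [f]; ring
    · intro k hk
      simp [f, Nat.choose_eq_zero_of_lt (by simpa using hk : n < k)]
  have hlimit : ∀ k,
      Tendsto (fun n => f n k ^ 2) atTop (𝓝 ((Real.exp (-u) * u ^ k / k !) ^ 2)) := by
    intro k
    refine (tendsto_choose_mul_pow_of_tendsto_mul_atTop k ?_).pow 2
    refine tendsto_const_nhds.congr' ?_
    filter_upwards [eventually_ne_atTop 0] with n hn
    field_simp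
  have hbound : ∀ᶠ n : ℕ in atTop, ∀ k, ‖f n k ^ 2‖ ≤ (u ^ k / k !) ^ 2 := by
    filter_upwards [eventually_ge_atTop ⌈u⌉₊] with n hn k
    have hun : u / n ≤ 1 := div_le_one_of_le₀ (Nat.ceil_le.1 hn) n.cast_nonneg
    have hq0 : 0 ≤ 1 - u / n := sub_nonneg.2 hun
    have hf : f n k ≤ u ^ k / k ! := calc
      f n k ≤ n.choose k * (u / n) ^ k :=
        mul_le_of_le_one_right (by positivity) (pow_le_one₀ hq0 (sub_le_self _ (by positivity)))
      _ ≤ u ^ k / k ! := choose_mul_div_pow_le hu n k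
    rw [Real.norm_of_nonneg (sq_nonneg _)]
    gcongr
  rw [funext hsum]
  convert tendsto_tsum_of_dominated_convergence (summable_sq_pow_div_factorial u) hlimit hbound
    using 2
  rw [← tsum_mul_left]
  congr 1 with k
  rw [mul_div_assoc, mul_pow, ← Real.exp_nat_mul]
  ring_nf

theorem bound_is_sharp_general (ub : ℝ) (hub0 : 0 ≤ ub)
    (hubmax : ∀ u : ℝ, 0 ≤ u → Mfun u ≤ Mfun ub) :
    (∀ a : ℕ, 1 ≤ a → ∀ (Ω : Type) (_ : MeasurableSpace Ω) (μ : Measure Ω),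
      IsProbabilityMeasure μ → ∀ U V : Ω → ℕ, IndepFun U V μ →
      (∀ k : ℕ, μ {ω | U ω = k} =
        ENNReal.ofReal ((a.choose k : ℝ) * (ub / a) ^ k * (1 - ub / a) ^ (a - k))) →
      (∀ k : ℕ, μ {ω | V ω = k} =
        ENNReal.ofReal ((a.choose k : ℝ) * (1 - ub / a) ^ k * (ub / a) ^ (a - k))) →
      Real.sqrt (2 * a * (ub / a) * (1 - ub / a)) * (μ {ω | U ω + V ω = a}).toReal
        = Real.sqrt (2 * ub * (1 - ub / a)) *
            ∑ k ∈ Finset.range (a + 1),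
              (a.choose k : ℝ) ^ 2 * (ub / a) ^ (2 * k) * (1 - ub / a) ^ (2 * (a - k))) ∧
    Filter.Tendsto
      (fun a : ℕ => Real.sqrt (2 * ub * (1 - ub / a)) *
        ∑ k ∈ Finset.range (a + 1),
          (a.choose k : ℝ) ^ 2 * (ub / a) ^ (2 * k) * (1 - ub / a) ^ (2 * (a - k)))
      Filter.atTop (nhds (Mfun ub)) ∧
    Mfun ub = sSup {r : ℝ | ∃ u : ℝ, 0 ≤ u ∧ r = Mfun u} := by
  refine ⟨fun a ha Ω _ μ _ U V hUV hU hV => ?_, ?_, ?_⟩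
  · have hp1 : ub / a ≤ 1 := by
      have h := (hU a).symm.trans_le prob_le_one
      rw [Nat.choose_self, Nat.sub_self, pow_zero, Nat.cast_one, one_mul, mul_one,
        ENNReal.ofReal_le_one] at h
      exact (pow_le_one_iff_of_nonneg (by positivity) (by omega)).1 h
    rw [toReal_measure_add_eq_sum_choose_sq hUV (by positivity) (sub_nonneg.2 hp1)
      (add_sub_cancel _ _) hU hV]
    congr 3
    field_simp
  · have hsqrt : Tendsto (fun n : ℕ => Real.sqrt (2 * ub * (1 - ub / n))) atTop
        (𝓝 (Real.sqrt (2 * ub))) := by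
      simpa using ((tendsto_const_div_atTop_nhds_zero_nat ub).const_sub 1).const_mul (2 * ub)
        |>.sqrt
    simpa only [Mfun, mul_assoc] using hsqrt.mul (tendsto_sum_choose_sq_mul_div_pow hub0)
  · symm
    refine IsGreatest.csSup_eq ⟨⟨ub, hub0, rfl⟩, ?_⟩
    rintro _ ⟨u, hu, rfl⟩
    exact hubmax u hu

theorem bound_is_sharp (ub : ℝ) (hub0 : 0 ≤ ub)
    (hubmax : ∀ u : ℝ, 0 ≤ u → Mfun u ≤ Mfun ub)
    (hubuniq : ∀ v : ℝ, 0 ≤ v → (∀ u : ℝ, 0 ≤ u → Mfun u ≤ Mfun v) → v = ub) :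
    (∀ a : ℕ, 1 ≤ a → ∀ (Ω : Type) (_ : MeasurableSpace Ω) (μ : Measure Ω),
      IsProbabilityMeasure μ → ∀ U V : Ω → ℕ, IndepFun U V μ →
      (∀ k : ℕ, μ {ω | U ω = k} =
        ENNReal.ofReal ((a.choose k : ℝ) * (ub / a) ^ k * (1 - ub / a) ^ (a - k))) →
      (∀ k : ℕ, μ {ω | V ω = k} =
        ENNReal.ofReal ((a.choose k : ℝ) * (1 - ub / a) ^ k * (ub / a) ^ (a - k))) →
      Real.sqrt (2 * a * (ub / a) * (1 - ub / a)) * (μ {ω | U ω + V ω = a}).toReal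
        = Real.sqrt (2 * ub * (1 - ub / a)) *
            ∑ k ∈ Finset.range (a + 1),
              (a.choose k : ℝ) ^ 2 * (ub / a) ^ (2 * k) * (1 - ub / a) ^ (2 * (a - k))) ∧
    Filter.Tendsto
      (fun a : ℕ => Real.sqrt (2 * ub * (1 - ub / a)) *
        ∑ k ∈ Finset.range (a + 1),
          (a.choose k : ℝ) ^ 2 * (ub / a) ^ (2 * k) * (1 - ub / a) ^ (2 * (a - k)))
      Filter.atTop (nhds (Mfun ub)) ∧
    Mfun ub = sSup {r : ℝ | ∃ u : ℝ, 0 ≤ u ∧ r = Mfun u} :=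
  bound_is_sharp_general ub hub0 hubmax
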